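/- arXiv:2604.02562 — 2 statements merged into one kernel-verified Lean document; each statement's English description precedes it below -/
import Mathlib

section
/- Let m ≥ 3 and let λ_1,…,λ_m ∈ ℤ² be such that each λ_i is primitive. Then every x = (x_1,…,x_m) ∈ L_1 ∩ ⋯ ∩ L_m can be written as x = α·a + β·b + φ(t) for some α, β ∈ ℤ and some t ∈ K; i.e., L_1 ∩ ⋯ ∩ L_m ⊆ ℤ⟨a⟩ + ℤ⟨b⟩ + φ(K). -/
namespace ToricStmt

/-- Cyclic successor on `Fin m` (indices mod `m`). -/
def fsucc {m : ℕ} (i : Fin m) : Fin m := ⟨(i.val + 1) % m, Nat.mod_lt _ i.pos⟩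

/-- The submodule `K` of linear relations among the `λ_i = (a_i, b_i)`. -/
def Kmod (m : ℕ) (a b : Fin m → ℤ) : Submodule ℤ (Fin m → ℤ) where
  carrier := {t | ∑ i, t i * a i = 0 ∧ ∑ i, t i * b i = 0}
  add_mem' := by
    intro x y hx hy
    obtain ⟨hx1, hx2⟩ := hx
    obtain ⟨hy1, hy2⟩ := hy
    constructor
    · simp only [Pi.add_apply, add_mul]
      rw [Finset.sum_add_distrib, hx1, hy1, add_zero]
    · simp only [Pi.add_apply, add_mul]
      rw [Finset.sum_add_distrib, hx2, hy2, add_zero]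
  zero_mem' := by constructor <;> simp
  smul_mem' := by
    intro c x hx
    obtain ⟨hx1, hx2⟩ := hx
    constructor
    · simp only [Pi.smul_apply, smul_eq_mul, mul_assoc]
      rw [← Finset.mul_sum, hx1, mul_zero]
    · simp only [Pi.smul_apply, smul_eq_mul, mul_assoc]
      rw [← Finset.mul_sum, hx2, mul_zero]

/-- The linear map `φ : ℤ^m → ℤ^m`, with `(φ t)_i = ∑_{j<i} (a_j b_i - a_i b_j) t_j`. -/
def phi (m : ℕ) (a b : Fin m → ℤ) : (Fin m → ℤ) →ₗ[ℤ] (Fin m → ℤ) where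
  toFun t := fun i => ∑ j ∈ Finset.univ.filter (fun j => j < i), (a j * b i - a i * b j) * t j
  map_add' x y := by
    funext i
    simp only [Pi.add_apply, mul_add]
    exact Finset.sum_add_distrib
  map_smul' c x := by
    funext i
    simp only [Pi.smul_apply, smul_eq_mul, RingHom.id_apply]
    rw [Finset.mul_sum]
    exact Finset.sum_congr rfl fun j _ => by ring

/-- The lattice `L_i`: the span of the `e_j` for `j ∉ {i, i+1}` together with
`a_i e_i + a_{i+1} e_{i+1}` and `b_i e_i + b_{i+1} e_{i+1}` (indices mod `m`). -/
def Lmod (m : ℕ) (a b : Fin m → ℤ) (i : Fin m) : Submodule ℤ (Fin m → ℤ) :=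
  Submodule.span ℤ
    ((fun j : Fin m => (Pi.single j 1 : Fin m → ℤ)) '' {j : Fin m | j ≠ i ∧ j ≠ fsucc i} ∪
      {a i • (Pi.single i 1 : Fin m → ℤ) + a (fsucc i) • (Pi.single (fsucc i) 1 : Fin m → ℤ),
       b i • (Pi.single i 1 : Fin m → ℤ) + b (fsucc i) • (Pi.single (fsucc i) 1 : Fin m → ℤ)})




def fpred {m : ℕ} (i : Fin m) : Fin m := ⟨(i.val + m - 1) % m, Nat.mod_lt _ i.pos⟩

lemma fsucc_fpred {m : ℕ} (i : Fin m) : fsucc (fpred i) = i := by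
  have hm := i.pos
  apply Fin.ext
  show ((i.val + m - 1) % m + 1) % m = i.val
  rw [Nat.mod_add_mod]
  have h : i.val + m - 1 + 1 = i.val + m := by omega
  rw [h, Nat.add_mod_right, Nat.mod_eq_of_lt i.isLt]

lemma fpred_fsucc {m : ℕ} (i : Fin m) : fpred (fsucc i) = i := by
  have hm := i.pos
  apply Fin.ext
  show ((i.val + 1) % m + m - 1) % m = i.val
  have h1 : (i.val + 1) % m + m - 1 = (i.val + 1) % m + (m - 1) := by
    have := Nat.mod_lt (i.val + 1) hm
    omega
  rw [h1, Nat.mod_add_mod]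
  have h2 : i.val + 1 + (m - 1) = i.val + m := by omega
  rw [h2, Nat.add_mod_right, Nat.mod_eq_of_lt i.isLt]

lemma fsucc_ne {m : ℕ} (hm2 : 2 ≤ m) (i : Fin m) : fsucc i ≠ i := by
  intro h
  have h' : (i.val + 1) % m = i.val := congrArg Fin.val h
  have h2 : i.val < m := i.isLt
  rcases Nat.lt_or_ge (i.val + 1) m with h1 | h1
  · rw [Nat.mod_eq_of_lt h1] at h'
    omega
  · have h3 : i.val + 1 = m := by omega
    rw [h3, Nat.mod_self] at h'
    omega

lemma coprime_solve (A B p q : ℤ) (h : IsCoprime A B) (hpq : p * A + q * B = 0) :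
    ∃ u : ℤ, p = u * B ∧ q = -(u * A) := by
  obtain ⟨x, y, hxy⟩ := h
  exact ⟨p * y - q * x, by linear_combination (-p) * hxy + x * hpq,
    by linear_combination (-q) * hxy + y * hpq⟩

lemma tele_all {m : ℕ} (c : Fin m → ℤ) : ∑ j, (c (fpred j) - c j) = 0 := by
  rw [Finset.sum_sub_distrib]
  have hb : Function.Bijective (fpred (m := m)) :=
    ⟨Function.LeftInverse.injective fsucc_fpred,
     Function.RightInverse.surjective fpred_fsucc⟩
  rw [Fintype.sum_bijective fpred hb (fun j => c (fpred j)) c (fun _ => rfl), sub_self]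

lemma tele_lt {m : ℕ} (c : Fin m → ℤ) (i : Fin m) :
    ∑ j ∈ Finset.univ.filter (fun j => j < i), (c (fpred j) - c j)
      = c (fpred ⟨0, i.pos⟩) - c (fpred i) := by
  obtain ⟨n, hn⟩ := i
  induction n with
  | zero =>
    have he : Finset.univ.filter (fun j : Fin m => j < (⟨0, hn⟩ : Fin m)) = ∅ := by
      ext j; simp [Fin.lt_def]
    rw [he, Finset.sum_empty, sub_self]
  | succ k ih =>
    have hk : k < m := by omega
    have hfilter : Finset.univ.filter (fun j : Fin m => j < ⟨k + 1, hn⟩)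
        = insert ⟨k, hk⟩ (Finset.univ.filter (fun j : Fin m => j < ⟨k, hk⟩)) := by
      ext j
      simp only [Finset.mem_filter, Finset.mem_insert, Finset.mem_univ, true_and,
        Fin.lt_def, Fin.ext_iff]
      omega
    rw [hfilter, Finset.sum_insert (by simp [Fin.lt_def])]
    rw [ih hk]
    have hp : fpred (⟨k + 1, hn⟩ : Fin m) = ⟨k, hk⟩ := by
      apply Fin.ext
      show (k + 1 + m - 1) % m = k
      have h : k + 1 + m - 1 = k + m := by omega
      rw [h, Nat.add_mod_right, Nat.mod_eq_of_lt hk]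
    rw [hp]
    ring

lemma mem_Lmod_extract (m : ℕ) (a b : Fin m → ℤ) (i : Fin m) (hne : fsucc i ≠ i)
    (x : Fin m → ℤ) (hx : x ∈ Lmod m a b i) :
    ∃ p q : ℤ, x i = p * a i + q * b i ∧
      x (fsucc i) = p * a (fsucc i) + q * b (fsucc i) := by
  set π : (Fin m → ℤ) →ₗ[ℤ] ℤ × ℤ :=
    LinearMap.prod (LinearMap.proj i) (LinearMap.proj (fsucc i)) with hπ
  have key : Lmod m a b i ≤ Submodule.comap π
      (Submodule.span ℤ {(a i, a (fsucc i)), (b i, b (fsucc i))}) := by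
    rw [Lmod, Submodule.span_le]
    intro v hv
    rcases hv with ⟨j, ⟨hj1, hj2⟩, rfl⟩ | hv
    · have hπv : π (Pi.single j 1) = 0 := by
        simp [hπ, LinearMap.prod_apply, Prod.ext_iff,
          Pi.single_eq_of_ne (Ne.symm hj1), Pi.single_eq_of_ne (Ne.symm hj2)]
      simp only [SetLike.mem_coe, Submodule.mem_comap, hπv]
      exact Submodule.zero_mem _
    · simp only [Set.mem_insert_iff, Set.mem_singleton_iff] at hv
      rcases hv with rfl | rfl
      · have hπv : π (a i • (Pi.single i 1 : Fin m → ℤ) +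
            a (fsucc i) • (Pi.single (fsucc i) 1 : Fin m → ℤ))
            = (a i, a (fsucc i)) := by
          simp [hπ, LinearMap.prod_apply, Prod.ext_iff, Pi.single_eq_same,
            Pi.single_eq_of_ne hne, Pi.single_eq_of_ne (Ne.symm hne)]
        simp only [SetLike.mem_coe, Submodule.mem_comap, hπv]
        exact Submodule.subset_span (Set.mem_insert _ _)
      · have hπv : π (b i • (Pi.single i 1 : Fin m → ℤ) +
            b (fsucc i) • (Pi.single (fsucc i) 1 : Fin m → ℤ))
            = (b i, b (fsucc i)) := by
          simp [hπ, LinearMap.prod_apply, Prod.ext_iff, Pi.single_eq_same,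
            Pi.single_eq_of_ne hne, Pi.single_eq_of_ne (Ne.symm hne)]
        simp only [SetLike.mem_coe, Submodule.mem_comap, hπv]
        exact Submodule.subset_span (Set.mem_insert_of_mem _ rfl)
  have hx' := key hx
  rw [Submodule.mem_comap, Submodule.mem_span_pair] at hx'
  obtain ⟨p, q, hpq⟩ := hx'
  have hπx : π x = (x i, x (fsucc i)) := rfl
  rw [hπx] at hpq
  refine ⟨p, q, ?_, ?_⟩
  · have := congrArg Prod.fst hpq
    simp only [Prod.fst_add, Prod.smul_fst, smul_eq_mul] at this
    linarith [this]
  · have := congrArg Prod.snd hpq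
    simp only [Prod.snd_add, Prod.smul_snd, smul_eq_mul] at this
    linarith [this]

/-- Every `x ∈ L_1 ∩ ⋯ ∩ L_m` can be written as
`α • a + β • b + φ(t)` with `α, β ∈ ℤ` and `t ∈ K`. -/
theorem stmt2 (m : ℕ) (hm : 3 ≤ m) (a b : Fin m → ℤ)
    (hprim : ∀ i, Int.gcd (a i) (b i) = 1) :
    ∀ x ∈ ⨅ i, Lmod m a b i,
      ∃ α β : ℤ, ∃ t ∈ Kmod m a b, x = α • a + β • b + phi m a b t := by
  intro x hx
  rw [Submodule.mem_iInf] at hx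
  have hm0 : 0 < m := by omega
  have hm2 : 2 ≤ m := by omega
  have h1 : ∀ i : Fin m, ∃ p q : ℤ, x i = p * a i + q * b i ∧
      x (fsucc i) = p * a (fsucc i) + q * b (fsucc i) :=
    fun i => mem_Lmod_extract m a b i (fsucc_ne hm2 i) x (hx i)
  choose P Q hP hQ using h1
  have h2 : ∀ i : Fin m, ∃ u : ℤ, P (fsucc i) - P i = u * b (fsucc i) ∧
      Q (fsucc i) - Q i = -(u * a (fsucc i)) := by
    intro i
    apply coprime_solve _ _ _ _ (Int.isCoprime_iff_gcd_eq_one.mpr (hprim (fsucc i)))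
    have e1 := hQ i
    have e2 := hP (fsucc i)
    linear_combination e1 - e2
  choose v hv1 hv2 using h2
  set t : Fin m → ℤ := fun j => -(v (fpred j)) with ht
  have htb : ∀ j : Fin m, b j * t j = P (fpred j) - P j := by
    intro j
    have := hv1 (fpred j)
    rw [fsucc_fpred] at this
    rw [ht]
    simp only []
    linarith [this]
  have hta : ∀ j : Fin m, a j * t j = -(Q (fpred j) - Q j) := by
    intro j
    have := hv2 (fpred j)
    rw [fsucc_fpred] at this
    rw [ht]
    simp only []
    linarith [this]
  set z : Fin m := ⟨0, hm0⟩ with hz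
  have hta' : ∀ j : Fin m, t j * a j = -(Q (fpred j) - Q j) := fun j => by
    rw [mul_comm]; exact hta j
  have htb' : ∀ j : Fin m, t j * b j = P (fpred j) - P j := fun j => by
    rw [mul_comm]; exact htb j
  refine ⟨P (fpred z), Q (fpred z), t, ⟨?_, ?_⟩, ?_⟩
  · show ∑ j, t j * a j = 0
    rw [Finset.sum_congr rfl (fun j _ => hta' j), Finset.sum_neg_distrib,
      tele_all Q, neg_zero]
  · show ∑ j, t j * b j = 0
    rw [Finset.sum_congr rfl (fun j _ => htb' j), tele_all P]
  · funext i
    have hxi : x i = P (fpred i) * a i + Q (fpred i) * b i := by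
      have h := hQ (fpred i)
      rwa [fsucc_fpred] at h
    show x i = P (fpred z) * a i + Q (fpred z) * b i +
      ∑ j ∈ Finset.univ.filter (fun j => j < i), (a j * b i - a i * b j) * t j
    have hsplit : ∑ j ∈ Finset.univ.filter (fun j => j < i), (a j * b i - a i * b j) * t j
        = b i * (∑ j ∈ Finset.univ.filter (fun j => j < i), (a j * t j))
          - a i * (∑ j ∈ Finset.univ.filter (fun j => j < i), (b j * t j)) := by
      rw [Finset.mul_sum, Finset.mul_sum, ← Finset.sum_sub_distrib]
      exact Finset.sum_congr rfl fun j _ => by ring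
    have ea : ∑ j ∈ Finset.univ.filter (fun j => j < i), (a j * t j)
        = -(Q (fpred z) - Q (fpred i)) := by
      rw [Finset.sum_congr rfl (fun j _ => hta j), Finset.sum_neg_distrib]
      exact congrArg Neg.neg (tele_lt Q i)
    have eb : ∑ j ∈ Finset.univ.filter (fun j => j < i), (b j * t j)
        = P (fpred z) - P (fpred i) := by
      rw [Finset.sum_congr rfl (fun j _ => htb j)]
      exact tele_lt P i
    rw [hsplit, ea, eb]
    linear_combination hxi

end ToricStmt
end

section
/- Let m ≥ 3 and let λ_1,…,λ_m ∈ ℤ² be arbitrary. Then for all α, β ∈ ℤ and all t ∈ K, the vector α·a + β·b + φ(t) belongs to L_i for every i = 1,…,m; i.e., ℤ⟨a⟩ + ℤ⟨b⟩ + φ(K) ⊆ L_1 ∩ ⋯ ∩ L_m. -/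
/-!
Write `S_k = ∑_{j<k} t_j λ_j`. Then `φ(t)_k = det(S_k, λ_k)`, so the `k`-th coordinate of
`v = α a + β b + φ(t)` is `⟨(α, β) + J S_k, λ_k⟩` for a fixed rotation `J`. The diagonal term
`det(λ_k, λ_k)` vanishes, so `S_k` may equally be taken over `j ≤ k`; hence the coordinates
`v_i` and `v_{i+1}` are both given by pairing `λ_i`, `λ_{i+1}` with the same vector, built from
`∑_{j≤i} t_j λ_j`. At the wrap-around `i = m` this uses `∑_j t_j λ_j = 0`, i.e. `t ∈ K`.
Agreeing with one integer combination of `a` and `b` at both `i` and `i+1` suffices for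
membership in `L_i` as soon as `i ≠ i+1`.
-/

namespace ToricStmt

open Finset

variable {m : ℕ}

theorem fsucc_ne_self (hm : 2 ≤ m) (i : Fin m) : fsucc i ≠ i := by
  intro h
  have hval : (i.val + 1) % m = i.val := congrArg Fin.val h
  rcases Nat.lt_or_ge (i.val + 1) m with hlt | hge
  · rw [Nat.mod_eq_of_lt hlt] at hval
    omega
  · rw [show i.val + 1 = m by omega, Nat.mod_self] at hval
    omega

theorem sum_lt_fsucc_eq_sum_le {M : Type*} [AddCommMonoid M] (f : Fin m → M)
    (hf : ∑ j, f j = 0) (i : Fin m) :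
    ∑ j ∈ univ.filter (· < fsucc i), f j = ∑ j ∈ univ.filter (· ≤ i), f j := by
  by_cases hlt : i.val + 1 < m
  · congr 1
    ext j
    simp only [mem_filter, mem_univ, true_and, Fin.lt_def, Fin.le_def, fsucc,
      Nat.mod_eq_of_lt hlt]
    omega
  · have hfsucc : (fsucc i).val = 0 := by
      simp [fsucc, show i.val + 1 = m by omega]
    have hlhs : univ.filter (· < fsucc i) = ∅ := by
      ext j
      simp [Fin.lt_def, hfsucc]
    have hrhs : univ.filter (· ≤ i) = univ := by
      ext j
      simp only [mem_filter, mem_univ, true_and, Fin.le_def, iff_true]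
      omega
    rw [hlhs, hrhs, sum_empty, hf]

section Phi

variable (a b t : Fin m → ℤ) (k : Fin m)

theorem phi_apply :
    phi m a b t k = b k * ∑ j ∈ univ.filter (· < k), t j * a j
      - a k * ∑ j ∈ univ.filter (· < k), t j * b j := by
  simp only [phi, LinearMap.coe_mk, AddHom.coe_mk, mul_sum, ← sum_sub_distrib]
  exact sum_congr rfl fun j _ => by ring

theorem phi_apply_eq_sum_le :
    phi m a b t k = b k * ∑ j ∈ univ.filter (· ≤ k), t j * a j
      - a k * ∑ j ∈ univ.filter (· ≤ k), t j * b j := by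
  have hle : univ.filter (· ≤ k) = insert k (univ.filter (· < k)) := by
    ext j
    simp [le_iff_lt_or_eq, or_comm]
  have hk : k ∉ univ.filter (· < k) := by simp
  rw [hle, sum_insert hk, sum_insert hk, phi_apply]
  ring

end Phi

section Lmod

variable (a b : Fin m → ℤ) (i : Fin m)

theorem mem_Lmod_of_apply_eq_zero (w : Fin m → ℤ) (hi : w i = 0) (hsucc : w (fsucc i) = 0) :
    w ∈ Lmod m a b i := by
  rw [pi_eq_sum_univ' w]
  refine Submodule.sum_mem _ fun j _ => ?_
  by_cases hji : j = i
  · simp [hji, hi]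
  by_cases hjs : j = fsucc i
  · simp [hjs, hsucc]
  exact Submodule.smul_mem _ _ (Submodule.subset_span (Or.inl ⟨j, ⟨hji, hjs⟩, rfl⟩))

theorem mem_Lmod_of_apply_eq (hne : fsucc i ≠ i) (v : Fin m → ℤ) (x y : ℤ)
    (hi : v i = x * a i + y * b i)
    (hsucc : v (fsucc i) = x * a (fsucc i) + y * b (fsucc i)) :
    v ∈ Lmod m a b i := by
  set ga : Fin m → ℤ := a i • Pi.single i 1 + a (fsucc i) • Pi.single (fsucc i) 1
  set gb : Fin m → ℤ := b i • Pi.single i 1 + b (fsucc i) • Pi.single (fsucc i) 1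
  have hga : ga ∈ Lmod m a b i := Submodule.subset_span (Or.inr (Set.mem_insert _ _))
  have hgb : gb ∈ Lmod m a b i := Submodule.subset_span (Or.inr (Set.mem_insert_of_mem _ rfl))
  have hrest : v - (x • ga + y • gb) ∈ Lmod m a b i :=
    mem_Lmod_of_apply_eq_zero a b i _
      (by simp [ga, gb, hne, hi]) (by simp [ga, gb, hne, hsucc])
  simpa using Submodule.add_mem _ hrest
    (Submodule.add_mem _ (Submodule.smul_mem _ x hga) (Submodule.smul_mem _ y hgb))

end Lmod

/-- For all `α, β ∈ ℤ` and `t ∈ K`, the vector `α • a + β • b + φ(t)`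
belongs to `L_i` for every `i`. -/
theorem stmt3 (m : ℕ) (hm : 3 ≤ m) (a b : Fin m → ℤ) :
    ∀ (α β : ℤ), ∀ t ∈ Kmod m a b, ∀ i : Fin m,
      α • a + β • b + phi m a b t ∈ Lmod m a b i := by
  rintro α β t ⟨hta, htb⟩ i
  refine mem_Lmod_of_apply_eq a b i (fsucc_ne_self (by omega) i) _
    (α - ∑ j ∈ univ.filter (· ≤ i), t j * b j) (β + ∑ j ∈ univ.filter (· ≤ i), t j * a j) ?_ ?_
  · simp only [Pi.add_apply, Pi.smul_apply, smul_eq_mul, phi_apply_eq_sum_le]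
    ring
  · simp only [Pi.add_apply, Pi.smul_apply, smul_eq_mul, phi_apply,
      sum_lt_fsucc_eq_sum_le _ hta, sum_lt_fsucc_eq_sum_le _ htb]
    ring

end ToricStmt
end
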